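/- Let N ≥ 2, R > 0, and let u : B_R → (0,∞) be continuous. Suppose there exists a linear isometry M ∈ O(N) such that, with u_M(x) = u(M⁻¹x): for every α ∈ (0,R] and h ∈ [−α,α], u_M is constant on {x ∈ ℝ^N : |x| = α and x_N = h}, and for every α ∈ (0,R] the function θ ↦ u_M(0,…,0, α cos θ, α sin θ) is nonincreasing for θ ∈ [π/2, 3π/2]. Then u is separable in B_R. -/

import Mathlib

open scoped RealInnerProductSpace

/-- The point `(0,…,0, cos θ, sin θ)` of `ℝ^N`. -/
noncomputable def circlePoint (N : ℕ) (θ : ℝ) : EuclideanSpace ℝ (Fin N) :=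
  (EuclideanSpace.equiv (Fin N) ℝ).symm fun i =>
    if (i : ℕ) = N - 2 then Real.cos θ else if (i : ℕ) = N - 1 then Real.sin θ else 0

/-- The reflection of `ℝ^N` across the hyperplane `{x : ⟪a,x⟫ = 0}` through the
origin, bounding the open half-space `H = {x : ⟪a,x⟫ > 0}`. -/
noncomputable def reflectHyp0 {E : Type*} [NormedAddCommGroup E] [InnerProductSpace ℝ E]
    (a : E) (x : E) : E :=
  x - ((2 * ⟪a, x⟫) / ⟪a, a⟫) • a

/-!
In the coordinates given by `M`, `u` restricted to the sphere of radius `α` depends only on the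
last coordinate `h`, and is nondecreasing in `h`: the point of height `h` is
`α • circlePoint N θ` with `α sin θ = h`, and on `[π/2, 3π/2]` the angle `θ` decreases as `h`
increases. The reflection `σ_H` preserves norms and moves the last coordinate of `M x` by
`-(2⟪a, x⟫ / ⟪a, a⟫) (M a)_N`, whose sign on `H` is that of `-(M a)_N` independently of `x`.
So `σ_H` either lowers `u` on all of `H ∩ B_R` or raises it there.
-/

lemma norm_circlePoint {N : ℕ} (hN : 2 ≤ N) (θ : ℝ) : ‖circlePoint N θ‖ = 1 := by
  obtain ⟨n, rfl⟩ : ∃ n, N = n + 2 := ⟨N - 2, by omega⟩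
  rw [← pow_eq_one_iff_of_nonneg (norm_nonneg _) two_ne_zero, EuclideanSpace.real_norm_sq_eq,
    Fin.sum_univ_castSucc, Fin.sum_univ_castSucc]
  have hzero : ∀ i : Fin n, ¬((i : ℕ) = n) ∧ ¬((i : ℕ) = n + 1) :=
    fun i => ⟨i.isLt.ne, by omega⟩
  simp [circlePoint, hzero, Real.cos_sq_add_sin_sq]

def lastIndex {N : ℕ} (hN : 2 ≤ N) : Fin N := ⟨N - 1, Nat.sub_one_lt (by omega)⟩

lemma circlePoint_lastIndex {N : ℕ} (hN : 2 ≤ N) (θ : ℝ) :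
    circlePoint N θ (lastIndex hN) = Real.sin θ := by
  simp [circlePoint, lastIndex, show N - 1 ≠ N - 2 by omega]

section Reflection
variable {E : Type*} [NormedAddCommGroup E] [InnerProductSpace ℝ E]

lemma norm_reflectHyp0 (a x : E) : ‖reflectHyp0 a x‖ = ‖x‖ := by
  rcases eq_or_ne a 0 with rfl | ha
  · simp [reflectHyp0]
  have haa : ⟪a, a⟫ ≠ 0 := inner_self_ne_zero.mpr ha
  rw [← sq_eq_sq₀ (norm_nonneg _) (norm_nonneg _), ← real_inner_self_eq_norm_sq,
    ← real_inner_self_eq_norm_sq, reflectHyp0, inner_sub_sub_self]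
  simp only [real_inner_smul_left, real_inner_smul_right, real_inner_comm x a]
  field_simp
  ring

lemma reflectHyp0_coeff_nonneg {a x : E} (hx : 0 ≤ ⟪a, x⟫) : 0 ≤ 2 * ⟪a, x⟫ / ⟪a, a⟫ := by
  have := real_inner_self_nonneg (x := a)
  positivity

end Reflection

/-- The angle `θ ∈ [π/2, 3π/2]` with `α sin θ = h`, for `|h| ≤ α`. -/
noncomputable def angleOfHeight (α h : ℝ) : ℝ := Real.arccos (h / α) + Real.pi / 2

lemma angleOfHeight_mem_Icc (α h : ℝ) :
    angleOfHeight α h ∈ Set.Icc (Real.pi / 2) (3 * Real.pi / 2) := by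
  have := Real.arccos_nonneg (h / α)
  have := Real.arccos_le_pi (h / α)
  constructor <;> unfold angleOfHeight <;> linarith

lemma antitone_angleOfHeight {α : ℝ} (hα : 0 < α) : Antitone (angleOfHeight α) :=
  fun _ _ h => add_le_add_left (Real.antitone_arccos (div_le_div_of_nonneg_right h hα.le)) _

lemma mul_sin_angleOfHeight {α h : ℝ} (hα : 0 < α) (hh : |h| ≤ α) :
    α * Real.sin (angleOfHeight α h) = h := by
  obtain ⟨hlo, hhi⟩ := abs_le.mp hh
  rw [angleOfHeight, Real.sin_add_pi_div_two,
    Real.cos_arccos (by rw [le_div_iff₀ hα]; linarith) (by rw [div_le_one hα]; linarith)]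
  field_simp

section Axial

variable {N : ℕ} (hN : 2 ≤ N) (R : ℝ) (u : EuclideanSpace ℝ (Fin N) → ℝ)
  (M : EuclideanSpace ℝ (Fin N) ≃ₗᵢ[ℝ] EuclideanSpace ℝ (Fin N))

def IsAxialIn : Prop :=
  ∀ α ∈ Set.Ioc (0 : ℝ) R, ∀ h ∈ Set.Icc (-α) α, ∀ x y : EuclideanSpace ℝ (Fin N),
    ‖x‖ = α → ‖y‖ = α → x (lastIndex hN) = h → y (lastIndex hN) = h → u (M.symm x) = u (M.symm y)

variable {hN R u M}

lemma IsAxialIn.apply_symm_eq (hax : IsAxialIn hN R u M) {α : ℝ} (hα : α ∈ Set.Ioc 0 R)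
    {z : EuclideanSpace ℝ (Fin N)} (hz : ‖z‖ = α) :
    u (M.symm z) = u (M.symm (α • circlePoint N (angleOfHeight α (z (lastIndex hN))))) := by
  have hheight : |z (lastIndex hN)| ≤ α := hz ▸ PiLp.norm_apply_le z _
  refine hax α hα _ (abs_le.mp hheight) _ _ hz ?_ rfl ?_
  · rw [norm_smul, norm_circlePoint hN, Real.norm_of_nonneg hα.1.le, mul_one]
  · rw [PiLp.smul_apply, circlePoint_lastIndex, smul_eq_mul,
      mul_sin_angleOfHeight hα.1 hheight]

lemma IsAxialIn.apply_le_apply_of_map_le (hax : IsAxialIn hN R u M)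
    (hmono : ∀ α ∈ Set.Ioc (0 : ℝ) R,
        AntitoneOn (fun θ => u (M.symm (α • circlePoint N θ)))
          (Set.Icc (Real.pi / 2) (3 * Real.pi / 2)))
    {x y : EuclideanSpace ℝ (Fin N)} (hx : ‖x‖ ∈ Set.Ioc 0 R) (hyx : ‖y‖ = ‖x‖)
    (hle : M y (lastIndex hN) ≤ M x (lastIndex hN)) : u y ≤ u x := by
  have hy : ‖M y‖ = ‖x‖ := by rw [M.norm_map, hyx]
  calc u y = u (M.symm (M y)) := by rw [M.symm_apply_apply]
    _ = _ := hax.apply_symm_eq hx hy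
    _ ≤ _ := hmono _ hx (angleOfHeight_mem_Icc _ _) (angleOfHeight_mem_Icc _ _)
        (antitone_angleOfHeight hx.1 hle)
    _ = u (M.symm (M x)) := (hax.apply_symm_eq hx (M.norm_map x)).symm
    _ = u x := by rw [M.symm_apply_apply]

end Axial

/-- A continuous positive function on the closed ball `B_R` which, after
an orthogonal change of coordinates `M`, is axially symmetric with respect to the
`x_N`-axis and monotone (nonincreasing in the latitude angle) on each sphere of radius
`α ∈ (0,R]`, is separable in `B_R`. -/
theorem stmt_10 (N : ℕ) (hN : 2 ≤ N) (R : ℝ)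
    (u : EuclideanSpace ℝ (Fin N) → ℝ)
    (M : EuclideanSpace ℝ (Fin N) ≃ₗᵢ[ℝ] EuclideanSpace ℝ (Fin N))
    (hax : ∀ α ∈ Set.Ioc (0 : ℝ) R, ∀ h ∈ Set.Icc (-α) α,
        ∀ x y : EuclideanSpace ℝ (Fin N), ‖x‖ = α → ‖y‖ = α →
          x ⟨N - 1, by omega⟩ = h → y ⟨N - 1, by omega⟩ = h →
          u (M.symm x) = u (M.symm y))
    (hmono : ∀ α ∈ Set.Ioc (0 : ℝ) R,
        AntitoneOn (fun θ => u (M.symm (α • circlePoint N θ)))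
          (Set.Icc (Real.pi / 2) (3 * Real.pi / 2))) :
    ∀ a : EuclideanSpace ℝ (Fin N), a ≠ 0 →
      (∀ x ∈ Metric.closedBall (0 : EuclideanSpace ℝ (Fin N)) R,
        0 < ⟪a, x⟫ → u (reflectHyp0 a x) ≤ u x) ∨
      (∀ x ∈ Metric.closedBall (0 : EuclideanSpace ℝ (Fin N)) R,
        0 < ⟪a, x⟫ → u x ≤ u (reflectHyp0 a x)) := by
  intro a _
  have hcoord : ∀ x, M (reflectHyp0 a x) (lastIndex hN) =
      M x (lastIndex hN) - 2 * ⟪a, x⟫ / ⟪a, a⟫ * M a (lastIndex hN) := by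
    intro x
    simp only [reflectHyp0, map_sub, map_smul, PiLp.sub_apply, PiLp.smul_apply, smul_eq_mul]
  have hnorm : ∀ x ∈ Metric.closedBall (0 : EuclideanSpace ℝ (Fin N)) R, 0 < ⟪a, x⟫ →
      ‖x‖ ∈ Set.Ioc 0 R := by
    intro x hx hax0
    refine ⟨norm_pos_iff.mpr ?_, mem_closedBall_zero_iff.mp hx⟩
    rintro rfl
    simp at hax0
  have hax' : IsAxialIn hN R u M := hax
  rcases le_or_gt 0 (M a (lastIndex hN)) with hMa | hMa
  · refine Or.inl fun x hx hax0 => hax'.apply_le_apply_of_map_le hmono (hnorm x hx hax0)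
      (norm_reflectHyp0 a x) ?_
    rw [hcoord]
    exact sub_le_self _ (mul_nonneg (reflectHyp0_coeff_nonneg hax0.le) hMa)
  · refine Or.inr fun x hx hax0 => hax'.apply_le_apply_of_map_le hmono
      (by rw [norm_reflectHyp0]; exact hnorm x hx hax0) (norm_reflectHyp0 a x).symm ?_
    rw [hcoord]
    exact (le_sub_self_iff _).mpr
      (mul_nonpos_of_nonneg_of_nonpos (reflectHyp0_coeff_nonneg hax0.le) hMa.le)
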